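/- arXiv:2301.07428 — 3 statements merged into one kernel-verified Lean document; each statement's English description precedes it below -/
import Mathlib

section
/- For any unit vector h in the tensor product H₁ ⊗ H₂ of finite-dimensional Hilbert spaces, the square of its largest Schmidt coefficient equals the supremum over all unit simple tensors x ⊗ y of |⟨h, x ⊗ y⟩|². -/
/-!
Expanding `h = ∑ μᵢ uᵢ ⊗ vᵢ` gives `⟨h, x ⊗ y⟩ = ∑ μᵢ ⟨uᵢ, x⟩⟨vᵢ, y⟩`. Bounding each `μᵢ` by `μ₁`,
Cauchy–Schwarz and Bessel's inequality for the orthonormal systems `(uᵢ)`, `(vᵢ)` give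
`|⟨h, x ⊗ y⟩| ≤ μ₁ ‖x‖ ‖y‖ = μ₁ ‖x ⊗ y‖`, and the bound is attained at `x ⊗ y = u₁ ⊗ v₁`.
-/

noncomputable section

/-- The simple tensor `x ⊗ y` of two vectors, realized in `EuclideanSpace ℂ (ι × κ)`. -/
def tens {ι κ : Type*} [Fintype ι] [Fintype κ] (x : EuclideanSpace ℂ ι) (y : EuclideanSpace ℂ κ) :
    EuclideanSpace ℂ (ι × κ) :=
  WithLp.toLp 2 (fun p : ι × κ => x p.1 * y p.2)

/-- `h = ∑ i, μ i • (u i ⊗ v i)` is a Schmidt decomposition of `h`. -/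
def IsSchmidt {ι κ : Type*} [Fintype ι] [Fintype κ] (h : EuclideanSpace ℂ (ι × κ)) {r : ℕ}
    (μ : Fin r → ℝ) (u : Fin r → EuclideanSpace ℂ ι) (v : Fin r → EuclideanSpace ℂ κ) : Prop :=
  (∀ i, 0 ≤ μ i) ∧ Orthonormal ℂ u ∧ Orthonormal ℂ v ∧
    h = ∑ i, (μ i : ℂ) • tens (u i) (v i)

open Finset

section Tensor

variable {ι κ : Type*} [Fintype ι] [Fintype κ]

lemma inner_tens (a c : EuclideanSpace ℂ ι) (b d : EuclideanSpace ℂ κ) :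
    (inner ℂ (tens a b) (tens c d) : ℂ) = (inner ℂ a c : ℂ) * (inner ℂ b d : ℂ) := by
  simp only [tens, PiLp.inner_apply, Fintype.sum_prod_type, sum_mul_sum, RCLike.inner_apply,
    map_mul]
  refine sum_congr rfl fun i _ => sum_congr rfl fun j _ => ?_
  ring

lemma norm_tens (x : EuclideanSpace ℂ ι) (y : EuclideanSpace ℂ κ) :
    ‖tens x y‖ = ‖x‖ * ‖y‖ := by
  rw [EuclideanSpace.norm_eq, EuclideanSpace.norm_eq, EuclideanSpace.norm_eq,
    ← Real.sqrt_mul (by positivity), sum_mul_sum, Fintype.sum_prod_type]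
  simp only [tens, norm_mul, mul_pow]

end Tensor

lemma Orthonormal.sum_norm_inner_mul_norm_inner_le {𝕜 E F ι : Type*} [RCLike 𝕜]
    [NormedAddCommGroup E] [InnerProductSpace 𝕜 E] [NormedAddCommGroup F]
    [InnerProductSpace 𝕜 F] {u : ι → E} {v : ι → F} (hu : Orthonormal 𝕜 u)
    (hv : Orthonormal 𝕜 v) (s : Finset ι) (x : E) (y : F) :
    ∑ i ∈ s, ‖(inner 𝕜 (u i) x : 𝕜)‖ * ‖(inner 𝕜 (v i) y : 𝕜)‖ ≤ ‖x‖ * ‖y‖ := by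
  calc _ ≤ √(∑ i ∈ s, ‖(inner 𝕜 (u i) x : 𝕜)‖ ^ 2) * √(∑ i ∈ s, ‖(inner 𝕜 (v i) y : 𝕜)‖ ^ 2) :=
        Real.sum_mul_le_sqrt_mul_sqrt _ _ _
    _ ≤ √(‖x‖ ^ 2) * √(‖y‖ ^ 2) := by
        gcongr
        exacts [hu.sum_inner_products_le x, hv.sum_inner_products_le y]
    _ = ‖x‖ * ‖y‖ := by rw [Real.sqrt_sq (norm_nonneg x), Real.sqrt_sq (norm_nonneg y)]

namespace IsSchmidt

variable {ι κ : Type*} [Fintype ι] [Fintype κ] {h : EuclideanSpace ℂ (ι × κ)} {r : ℕ}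
  {μ : Fin r → ℝ} {u : Fin r → EuclideanSpace ℂ ι} {v : Fin r → EuclideanSpace ℂ κ}

lemma inner_tens_eq_sum (hS : IsSchmidt h μ u v) (x : EuclideanSpace ℂ ι)
    (y : EuclideanSpace ℂ κ) :
    (inner ℂ h (tens x y) : ℂ) = ∑ i, (μ i : ℂ) * inner ℂ (u i) x * inner ℂ (v i) y := by
  obtain ⟨-, -, -, rfl⟩ := hS
  rw [sum_inner]
  refine sum_congr rfl fun i _ => ?_
  rw [inner_smul_left, inner_tens, Complex.conj_ofReal, mul_assoc]

lemma inner_tens_self (hS : IsSchmidt h μ u v) (j : Fin r) :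
    (inner ℂ h (tens (u j) (v j)) : ℂ) = μ j := by
  have ⟨_, hu, hv, _⟩ := hS
  rw [hS.inner_tens_eq_sum, sum_eq_single j]
  · simp [inner_self_eq_norm_sq_to_K, hu.1 j, hv.1 j]
  · intro i _ hij
    rw [hu.inner_eq_zero hij, mul_zero, zero_mul]
  · exact fun hj => absurd (mem_univ j) hj

lemma norm_inner_tens_le (hS : IsSchmidt h μ u v) {M : ℝ} (hM₀ : 0 ≤ M) (hM : ∀ i, μ i ≤ M)
    (x : EuclideanSpace ℂ ι) (y : EuclideanSpace ℂ κ) :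
    ‖(inner ℂ h (tens x y) : ℂ)‖ ≤ M * ‖tens x y‖ := by
  have ⟨hμ, hu, hv, _⟩ := hS
  calc ‖(inner ℂ h (tens x y) : ℂ)‖
      ≤ ∑ i, M * (‖(inner ℂ (u i) x : ℂ)‖ * ‖(inner ℂ (v i) y : ℂ)‖) := by
        rw [hS.inner_tens_eq_sum]
        refine (norm_sum_le _ _).trans (sum_le_sum fun i _ => ?_)
        rw [norm_mul, norm_mul, Complex.norm_real, Real.norm_of_nonneg (hμ i), mul_assoc]
        gcongr
        exact hM i
    _ ≤ M * ‖tens x y‖ := by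
        rw [← mul_sum, norm_tens]
        gcongr
        exact hu.sum_norm_inner_mul_norm_inner_le hv _ x y

end IsSchmidt

theorem schmidt_max_sq_eq_sup_inner_general {ι κ : Type*} [Fintype ι] [Fintype κ]
    (h : EuclideanSpace ℂ (ι × κ)) {r : ℕ}
    (μ : Fin r → ℝ) (u : Fin r → EuclideanSpace ℂ ι) (v : Fin r → EuclideanSpace ℂ κ)
    (hS : IsSchmidt h μ u v) (μ₁ : ℝ) (hμ₁ : IsGreatest (Set.range μ) μ₁) :
    μ₁ ^ 2 = sSup {t : ℝ | ∃ (x : EuclideanSpace ℂ ι) (y : EuclideanSpace ℂ κ),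
      ‖tens x y‖ = 1 ∧ t = ‖(inner ℂ h (tens x y) : ℂ)‖ ^ 2} := by
  obtain ⟨⟨j, rfl⟩, hμ_le⟩ := hμ₁
  have ⟨hμ, hu, hv, _⟩ := hS
  refine (IsGreatest.csSup_eq ⟨?_, ?_⟩).symm
  · refine ⟨u j, v j, ?_, ?_⟩
    · rw [norm_tens, hu.1 j, hv.1 j, mul_one]
    · rw [hS.inner_tens_self, Complex.norm_real, Real.norm_of_nonneg (hμ j)]
  · rintro t ⟨x, y, hxy, rfl⟩
    have hle := hS.norm_inner_tens_le (hμ j) (fun i => hμ_le ⟨i, rfl⟩) x y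
    rw [hxy, mul_one] at hle
    exact pow_le_pow_left₀ (norm_nonneg _) hle 2

/-- for a unit vector `h` in the tensor product of two finite-dimensional Hilbert
spaces, the square of the largest Schmidt coefficient equals the supremum, over unit simple
tensors `x ⊗ y`, of `|⟨h, x ⊗ y⟩|²`. -/
theorem schmidt_max_sq_eq_sup_inner {ι κ : Type*} [Fintype ι] [Fintype κ]
    (h : EuclideanSpace ℂ (ι × κ)) (hh : ‖h‖ = 1) {r : ℕ}
    (μ : Fin r → ℝ) (u : Fin r → EuclideanSpace ℂ ι) (v : Fin r → EuclideanSpace ℂ κ)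
    (hS : IsSchmidt h μ u v) (μ₁ : ℝ) (hμ₁ : IsGreatest (Set.range μ) μ₁) :
    μ₁ ^ 2 = sSup {t : ℝ | ∃ (x : EuclideanSpace ℂ ι) (y : EuclideanSpace ℂ κ),
      ‖tens x y‖ = 1 ∧ t = ‖(inner ℂ h (tens x y) : ℂ)‖ ^ 2} :=
  schmidt_max_sq_eq_sup_inner_general h μ u v hS μ₁ hμ₁
end
end

section
/- Let p > 1 and A ∈ (0,1). If every unit vector in a subspace W ⊂ K ⊗ E has largest Schmidt coefficient μ₁ with μ₁² ≤ A, then for the quantum channel N(ρ) = Tr_E(VρV*) with isometry V of range W, the minimal output Rényi p-entropy satisfies S_p^min(N) ≥ (1/(1−p))·log₂((1−A)ᵖ + Aᵖ). -/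
/-!
The squared Schmidt coefficients `x i = μ i ^ 2` of `V h` form a probability vector with entries
at most `A`, and since `1 - p < 0` it suffices to show `∑ x i ^ p ≤ f A`, where
`f s = s ^ p + (1 - s) ^ p`. Let `t` be the largest entry. From `x ^ p ≤ M ^ (p - 1) * x` for
`x ≤ M` one gets `∑ x i ^ p ≤ t ^ (p - 1)`, and, since every other entry is at most `1 - t`,
also `∑ x i ^ p ≤ f t`. As `f` is convex and symmetric about `1/2`, it grows with `|s - 1/2|`:
for `t ≥ 1/2` this gives `f t ≤ f A`, and for `t < 1/2` it gives
`t ^ (p - 1) ≤ (1/2) ^ (p - 1) = f (1/2) ≤ f A`.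
-/

noncomputable section

open Set

theorem inner_tens_s10 {ι κ : Type*} [Fintype ι] [Fintype κ]
    (x x' : EuclideanSpace ℂ ι) (y y' : EuclideanSpace ℂ κ) :
    inner ℂ (tens x y) (tens x' y') = inner ℂ x x' * inner ℂ y y' := by
  simp only [PiLp.inner_apply, RCLike.inner_apply, tens, map_mul]
  rw [Finset.sum_mul_sum, Fintype.sum_prod_type]
  exact Finset.sum_congr rfl fun i _ => Finset.sum_congr rfl fun j _ => by ring

theorem orthonormal_tens {ι κ η : Type*} [Fintype ι] [Fintype κ] {u : η → EuclideanSpace ℂ ι}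
    {v : η → EuclideanSpace ℂ κ} (hu : Orthonormal ℂ u) (hv : Orthonormal ℂ v) :
    Orthonormal ℂ fun i => tens (u i) (v i) := by
  classical
  rw [orthonormal_iff_ite] at hu hv ⊢
  intro i j
  rw [inner_tens_s10, hu, hv]
  split_ifs <;> simp

theorem IsSchmidt.sum_sq_eq_norm_sq {ι κ : Type*} [Fintype ι] [Fintype κ]
    {h : EuclideanSpace ℂ (ι × κ)} {r : ℕ} {μ : Fin r → ℝ} {u : Fin r → EuclideanSpace ℂ ι}
    {v : Fin r → EuclideanSpace ℂ κ} (hS : IsSchmidt h μ u v) : ∑ i, μ i ^ 2 = ‖h‖ ^ 2 := by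
  obtain ⟨-, hu, hv, rfl⟩ := hS
  have := (orthonormal_tens hu hv).orthogonalFamily.norm_sum (fun i => (μ i : ℂ)) Finset.univ
  simp only [LinearIsometry.toSpanSingleton_apply, Complex.norm_real, Real.norm_eq_abs,
    sq_abs] at this
  exact this.symm

theorem convexOn_rpow_add_rpow_one_sub {p : ℝ} (hp : 1 ≤ p) :
    ConvexOn ℝ (Icc 0 1) fun x : ℝ => x ^ p + (1 - x) ^ p := by
  have hline : ∀ x : ℝ, AffineMap.lineMap (1 : ℝ) 0 x = 1 - x := fun x => by
    simp [AffineMap.lineMap_apply]; ring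
  have hflip := (convexOn_rpow hp).comp_affineMap (AffineMap.lineMap (1 : ℝ) 0)
  have hdom : AffineMap.lineMap (1 : ℝ) 0 ⁻¹' Ici 0 = Iic (1 : ℝ) := by ext x; simp [hline]
  rw [hdom] at hflip
  exact ((convexOn_rpow hp).subset Icc_subset_Ici_self (convex_Icc 0 1)).add
    (hflip.subset Icc_subset_Iic_self (convex_Icc 0 1)) |>.congr fun x _ => by simp [hline]

-- `s` lies between `1 - t` and `t`, where the convex function takes the same value.
theorem rpow_add_rpow_one_sub_le_of_abs_sub_half_le {p s t : ℝ} (hp : 1 ≤ p)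
    (hst : |s - 1 / 2| ≤ |t - 1 / 2|) (ht₀ : 0 ≤ t) (ht₁ : t ≤ 1) :
    s ^ p + (1 - s) ^ p ≤ t ^ p + (1 - t) ^ p := by
  have hs : s ∈ segment ℝ (1 - t) t := by
    rw [segment_eq_uIcc, mem_uIcc]
    rcases le_total t (1 / 2) with h | h
    · rw [abs_of_nonpos (by linarith : t - 1 / 2 ≤ 0)] at hst
      right; constructor <;> linarith [abs_le.1 hst]
    · rw [abs_of_nonneg (by linarith : 0 ≤ t - 1 / 2)] at hst
      left; constructor <;> linarith [abs_le.1 hst]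
  have h := (convexOn_rpow_add_rpow_one_sub hp).le_on_segment
    (⟨by linarith, by linarith⟩ : 1 - t ∈ Icc (0 : ℝ) 1) ⟨ht₀, ht₁⟩ hs
  simpa [add_comm] using h

theorem rpow_sub_one_mul_self {p x : ℝ} (hp : 1 ≤ p) (hx : 0 ≤ x) : x ^ (p - 1) * x = x ^ p := by
  rw [← Real.rpow_add_one' hx (by linarith), sub_add_cancel]

theorem rpow_le_rpow_sub_one_mul {p x M : ℝ} (hp : 1 ≤ p) (hx : 0 ≤ x) (hxM : x ≤ M) :
    x ^ p ≤ M ^ (p - 1) * x :=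
  calc x ^ p = x ^ (p - 1) * x := (rpow_sub_one_mul_self hp hx).symm
    _ ≤ M ^ (p - 1) * x := by gcongr

theorem Finset.sum_rpow_le_rpow_sub_one_mul_sum {ι : Type*} {s : Finset ι} {x : ι → ℝ} {p M : ℝ}
    (hp : 1 ≤ p) (hx : ∀ i ∈ s, 0 ≤ x i) (hxM : ∀ i ∈ s, x i ≤ M) :
    ∑ i ∈ s, x i ^ p ≤ M ^ (p - 1) * ∑ i ∈ s, x i := by
  rw [Finset.mul_sum]
  exact Finset.sum_le_sum fun i hi => rpow_le_rpow_sub_one_mul hp (hx i hi) (hxM i hi)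

theorem sum_rpow_le_rpow_add_rpow_one_sub {ι : Type*} [Fintype ι] [DecidableEq ι] {x : ι → ℝ}
    {p : ℝ} (hp : 1 ≤ p) (hx : ∀ i, 0 ≤ x i) (hsum : ∑ i, x i = 1) (i₀ : ι) :
    ∑ i, x i ^ p ≤ x i₀ ^ p + (1 - x i₀) ^ p := by
  have hrest : ∑ i ∈ Finset.univ.erase i₀, x i = 1 - x i₀ := by
    rw [← hsum, ← Finset.add_sum_erase _ _ (Finset.mem_univ i₀), add_sub_cancel_left]
  have hle_rest : ∀ i ∈ Finset.univ.erase i₀, x i ≤ 1 - x i₀ := fun i hi =>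
    hrest ▸ Finset.single_le_sum (fun j _ => hx j) hi
  rw [← Finset.add_sum_erase _ _ (Finset.mem_univ i₀)]
  gcongr
  calc _ ≤ (1 - x i₀) ^ (p - 1) * ∑ i ∈ Finset.univ.erase i₀, x i :=
        Finset.sum_rpow_le_rpow_sub_one_mul_sum hp (fun i _ => hx i) hle_rest
    _ = (1 - x i₀) ^ p := by
        rw [hrest, rpow_sub_one_mul_self hp (hrest ▸ Finset.sum_nonneg fun i _ => hx i)]

theorem sum_rpow_le_of_forall_le {ι : Type*} [Fintype ι] {x : ι → ℝ} {p A : ℝ}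
    (hp : 1 ≤ p) (hA : A ≤ 1) (hx : ∀ i, 0 ≤ x i) (hxA : ∀ i, x i ≤ A) (hsum : ∑ i, x i = 1) :
    ∑ i, x i ^ p ≤ (1 - A) ^ p + A ^ p := by
  classical
  obtain ⟨i₀, -, hi₀⟩ := Finset.exists_max_image Finset.univ x
    (Finset.nonempty_of_sum_ne_zero (f := x) (by simp [hsum]))
  have ht₀ := hx i₀
  have htA := hxA i₀
  rw [add_comm]
  rcases le_or_gt (1 / 2) (x i₀) with ht | ht
  · refine (sum_rpow_le_rpow_add_rpow_one_sub hp hx hsum i₀).trans ?_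
    refine rpow_add_rpow_one_sub_le_of_abs_sub_half_le hp ?_ (by linarith) hA
    rw [abs_of_nonneg (by linarith), abs_of_nonneg (by linarith)]
    linarith
  · have hhalf : (1 / 2 : ℝ) ^ (p - 1) = (1 / 2) ^ p + (1 - 1 / 2) ^ p := by
      have := rpow_sub_one_mul_self hp (by norm_num : (0 : ℝ) ≤ 1 / 2)
      norm_num at this ⊢
      linarith
    calc ∑ i, x i ^ p ≤ x i₀ ^ (p - 1) * ∑ i, x i :=
          Finset.sum_rpow_le_rpow_sub_one_mul_sum hp (fun i _ => hx i) fun i _ =>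
            hi₀ i (Finset.mem_univ i)
      _ ≤ (1 / 2) ^ (p - 1) := by rw [hsum, mul_one]; gcongr
      _ ≤ A ^ p + (1 - A) ^ p := hhalf ▸ rpow_add_rpow_one_sub_le_of_abs_sub_half_le hp
          (by simp) (by linarith) hA

theorem sum_rpow_pos {ι : Type*} [Fintype ι] {x : ι → ℝ} (p : ℝ) (hx : ∀ i, 0 ≤ x i)
    (hsum : 0 < ∑ i, x i) : 0 < ∑ i, x i ^ p := by
  obtain ⟨i, -, hi⟩ :=
    Finset.exists_lt_of_sum_lt (f := 0) (g := x) (s := Finset.univ) (by simpa using hsum)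
  exact Finset.sum_pos' (fun j _ => Real.rpow_nonneg (hx j) p)
    ⟨i, Finset.mem_univ i, Real.rpow_pos_of_pos hi p⟩

/-- let `p > 1`, `A ∈ (0,1)`, and `W = ran V ⊂ K ⊗ E` for an isometry
`V : H → K ⊗ E`, such that every unit vector in `W` has largest Schmidt coefficient `μ₁` with
`μ₁² ≤ A`.  Then every output `N(|h⟩⟨h|) = Tr_E(V|h⟩⟨h|V*)` of the channel `N`, whose
eigenvalues are the squares `μᵢ²` of the Schmidt coefficients of `V h`, has Rényi `p`-entropy at
least `(1/(1-p)) log₂ ((1-A)ᵖ + Aᵖ)`; i.e. `S_p^min(N) ≥ (1/(1-p)) log₂ ((1-A)ᵖ + Aᵖ)`. -/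
theorem min_output_renyi_lower_bound (dK dE m : ℕ) (p A : ℝ) (hp : 1 < p)
    (hA : A ∈ Set.Ioo (0 : ℝ) 1)
    (W : Submodule ℂ (EuclideanSpace ℂ (Fin dK × Fin dE)))
    (V : EuclideanSpace ℂ (Fin m) →ₗᵢ[ℂ] EuclideanSpace ℂ (Fin dK × Fin dE))
    (hV : LinearMap.range V.toLinearMap = W)
    (hbound : ∀ ξ ∈ W, ‖ξ‖ = 1 → ∀ (r : ℕ) (μ : Fin r → ℝ)
      (u : Fin r → EuclideanSpace ℂ (Fin dK)) (v : Fin r → EuclideanSpace ℂ (Fin dE))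
      (μ₁ : ℝ), IsSchmidt ξ μ u v → IsGreatest (Set.range μ) μ₁ → μ₁ ^ 2 ≤ A) :
    ∀ h : EuclideanSpace ℂ (Fin m), ‖h‖ = 1 → ∀ (r : ℕ) (μ : Fin r → ℝ)
      (u : Fin r → EuclideanSpace ℂ (Fin dK)) (v : Fin r → EuclideanSpace ℂ (Fin dE)),
      IsSchmidt (V h) μ u v →
      (1 / (1 - p)) * Real.logb 2 (∑ i, (μ i ^ 2) ^ p) ≥
        (1 / (1 - p)) * Real.logb 2 ((1 - A) ^ p + A ^ p) := by
  intro h hh r μ u v hS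
  have hVh : ‖V h‖ = 1 := by rw [V.norm_map, hh]
  have hsum : ∑ i, μ i ^ 2 = 1 := by rw [hS.sum_sq_eq_norm_sq, hVh, one_pow]
  have hle : ∀ i, μ i ^ 2 ≤ A := by
    obtain ⟨i₀, -, hi₀⟩ := Finset.exists_max_image Finset.univ μ
      (Finset.nonempty_of_sum_ne_zero (by simp [hsum] : ∑ i, μ i ^ 2 ≠ 0))
    have hμ₁ := hbound (V h) (hV ▸ LinearMap.mem_range_self _ h) hVh r μ u v (μ i₀) hS
      ⟨mem_range_self i₀, forall_mem_range.2 fun i => hi₀ i (Finset.mem_univ i)⟩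
    exact fun i => (pow_le_pow_left₀ (hS.1 i) (hi₀ i (Finset.mem_univ i)) 2).trans hμ₁
  have hpos := sum_rpow_pos p (fun i => sq_nonneg (μ i)) (hsum ▸ one_pos)
  have hkey := sum_rpow_le_of_forall_le hp.le hA.2.le (fun i => sq_nonneg (μ i)) hle hsum
  exact mul_le_mul_of_nonpos_left (Real.logb_le_logb_of_le one_lt_two hpos hkey)
    (one_div_nonpos.2 (by linarith))
end
end

section
/- The linear span of the set of all d × d symmetric permutation matrices has dimension 1 + C(d,2) = 1 + d(d−1)/2. -/
/-!
A symmetric permutation matrix is `Π_σ` for an involution `σ`, and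
`2 (Π_σ - 1) = ∑ₓ (Π_(x σx) - 1)`: each 2-cycle of `σ` occurs twice in the sum and each fixed
point contributes `Π_1 - 1 = 0`. So the span is spanned by `1` and the `C(d,2)` matrices
`Π_τ - 1`, `τ` a transposition. These are linearly independent: the off-diagonal `(a, b)` entry
isolates the coefficient of `Π_(a b) - 1`, and then that of `1` must vanish.
-/

open Matrix

noncomputable section

/-- The permutation matrix of `σ`, with entries `Π i j = [σ j = i]`. -/
def permMat {d : ℕ} (σ : Equiv.Perm (Fin d)) : Matrix (Fin d) (Fin d) ℂ :=
  Matrix.of fun i j => if σ j = i then 1 else 0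

theorem Equiv.swap_apply_of_involutive {α : Type*} [DecidableEq α] {f : Equiv.Perm α}
    (hf : Function.Involutive f) (x y : α) :
    swap x (f x) y = if x = y ∨ x = f y then f y else y := by
  have := hf x
  have := hf y
  rw [swap_apply_def]
  split_ifs <;> grind

theorem Equiv.swap_apply_eq_iff_sym2_eq {α : Type*} [DecidableEq α] {a b : α} (hab : a ≠ b)
    (c e : α) : swap c e b = a ↔ s(a, b) = s(c, e) := by
  rw [swap_apply_def, Sym2.eq_iff]
  split_ifs <;> grind

section

variable {d : ℕ}

lemma permMat_apply (σ : Equiv.Perm (Fin d)) (i j : Fin d) :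
    permMat σ i j = if σ j = i then 1 else 0 := rfl

@[simp]
lemma permMat_one : permMat (1 : Equiv.Perm (Fin d)) = 1 := by
  ext i j
  simp [permMat_apply, one_apply, eq_comm]

lemma transpose_permMat_eq_self_iff {σ : Equiv.Perm (Fin d)} :
    (permMat σ)ᵀ = permMat σ ↔ Function.Involutive σ := by
  refine ⟨fun h x => ?_, fun h => ?_⟩
  · simpa [permMat_apply] using congr_fun₂ h x (σ x)
  · ext i j
    exact if_congr (h.eq_iff.trans eq_comm) rfl rfl

lemma setOf_symmetric_permMat_eq :
    {M : Matrix (Fin d) (Fin d) ℂ | ∃ σ : Equiv.Perm (Fin d), M = permMat σ ∧ Mᵀ = M} =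
      permMat '' {σ | Function.Involutive σ} := by
  ext M
  constructor
  · rintro ⟨σ, rfl, hσ⟩
    exact ⟨σ, transpose_permMat_eq_self_iff.1 hσ, rfl⟩
  · rintro ⟨σ, hσ, rfl⟩
    exact ⟨σ, rfl, transpose_permMat_eq_self_iff.2 hσ⟩

lemma permMat_swap_sub_one_apply {σ : Equiv.Perm (Fin d)} (hσ : Function.Involutive σ)
    (x i j : Fin d) :
    (permMat (Equiv.swap x (σ x)) - 1) i j =
      if x ∈ ({j, σ j} : Finset (Fin d)) then (permMat σ - 1) i j else 0 := by
  simp only [Matrix.sub_apply, permMat_apply, one_apply, Equiv.swap_apply_of_involutive hσ,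
    Finset.mem_insert, Finset.mem_singleton]
  split_ifs <;> grind

lemma sum_permMat_swap_sub_one {σ : Equiv.Perm (Fin d)} (hσ : Function.Involutive σ) :
    ∑ x, (permMat (Equiv.swap x (σ x)) - 1) = (2 : ℂ) • (permMat σ - 1) := by
  ext i j
  simp only [Matrix.sum_apply, permMat_swap_sub_one_apply hσ, Finset.sum_ite_mem,
    Finset.univ_inter, Finset.sum_const, Matrix.smul_apply]
  by_cases hj : σ j = j
  · simp [permMat_apply, hj, one_apply, eq_comm]
  · simp [Finset.card_pair (Ne.symm hj)]

def permMatSwapSubOne : Sym2 (Fin d) → Matrix (Fin d) (Fin d) ℂ :=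
  Sym2.lift ⟨fun a b => permMat (Equiv.swap a b) - 1, fun a b => by simp only [Equiv.swap_comm]⟩

lemma permMatSwapSubOne_mk (a b : Fin d) :
    permMatSwapSubOne s(a, b) = permMat (Equiv.swap a b) - 1 := rfl

lemma permMatSwapSubOne_apply_of_ne {a b : Fin d} (hab : a ≠ b) (z : Sym2 (Fin d)) :
    permMatSwapSubOne z a b = if s(a, b) = z then 1 else 0 := by
  induction z using Sym2.inductionOn with
  | hf c e =>
    simp [permMatSwapSubOne_mk, permMat_apply, one_apply_ne hab,
      Equiv.swap_apply_eq_iff_sym2_eq hab]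

lemma permMatSwapSubOne_of_isDiag {z : Sym2 (Fin d)} (hz : z.IsDiag) :
    permMatSwapSubOne z = 0 := by
  induction z using Sym2.inductionOn with
  | hf a b =>
    obtain rfl := Sym2.mk_isDiag_iff.1 hz
    simp [permMatSwapSubOne_mk, ← Equiv.Perm.one_def]

def symmPermBasis (d : ℕ) : Option {z : Sym2 (Fin d) // ¬z.IsDiag} → Matrix (Fin d) (Fin d) ℂ
  | none => 1
  | some z => permMatSwapSubOne z.1

lemma permMatSwapSubOne_mem_span_symmPermBasis (z : Sym2 (Fin d)) :
    permMatSwapSubOne z ∈ Submodule.span ℂ (Set.range (symmPermBasis d)) := by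
  by_cases hz : z.IsDiag
  · simp [permMatSwapSubOne_of_isDiag hz]
  · exact Submodule.subset_span ⟨some ⟨z, hz⟩, rfl⟩

lemma span_image_permMat_involutive :
    Submodule.span ℂ (permMat '' {σ | Function.Involutive σ}) =
      Submodule.span ℂ (Set.range (symmPermBasis d)) := by
  apply le_antisymm
  · rw [Submodule.span_le]
    rintro _ ⟨σ, hσ, rfl⟩
    have hdecomp : permMat σ = 1 + (2 : ℂ)⁻¹ • ∑ x, permMatSwapSubOne s(x, σ x) := by
      simp only [permMatSwapSubOne_mk, sum_permMat_swap_sub_one hσ, smul_smul]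
      norm_num
    rw [hdecomp]
    refine add_mem (Submodule.subset_span ⟨none, rfl⟩) (Submodule.smul_mem _ _ (sum_mem ?_))
    exact fun x _ => permMatSwapSubOne_mem_span_symmPermBasis _
  · rw [Submodule.span_le]
    have hmem : ∀ σ : Equiv.Perm (Fin d), Function.Involutive σ →
        permMat σ ∈ Submodule.span ℂ (permMat '' {σ | Function.Involutive σ}) :=
      fun σ hσ => Submodule.subset_span ⟨σ, hσ, rfl⟩
    have hone := permMat_one (d := d) ▸ hmem 1 fun _ => rfl
    rintro _ ⟨_ | ⟨z, _⟩, rfl⟩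
    · exact hone
    · induction z using Sym2.inductionOn with
      | hf a b => exact sub_mem (hmem _ (Equiv.swap_apply_self a b)) hone

lemma linearIndependent_symmPermBasis [NeZero d] : LinearIndependent ℂ (symmPermBasis d) := by
  rw [Fintype.linearIndependent_iff]
  intro g hg
  rw [Fintype.sum_option] at hg
  have hsome : ∀ z, g (some z) = 0 := by
    rintro ⟨z, hz⟩
    induction z using Sym2.inductionOn with
    | hf a b =>
      have hab : a ≠ b := fun h => hz (Sym2.mk_isDiag_iff.2 h)
      have hentry := congr_fun₂ hg a b
      simp only [symmPermBasis, Matrix.add_apply, Matrix.smul_apply, one_apply_ne hab,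
        Matrix.sum_apply, permMatSwapSubOne_apply_of_ne hab, smul_eq_mul, mul_ite, mul_one,
        mul_zero, zero_add, Matrix.zero_apply] at hentry
      rwa [Fintype.sum_eq_single ⟨s(a, b), hz⟩ fun w hw => if_neg fun h => hw (Subtype.ext h.symm),
        if_pos rfl] at hentry
  simp only [hsome, zero_smul, Finset.sum_const_zero, add_zero, symmPermBasis, smul_eq_zero,
    one_ne_zero, or_false] at hg
  rintro (_ | z)
  exacts [hg, hsome z]

end

/-- the linear span (inside `M_d(ℂ)`) of the set of all `d × d` symmetric
permutation matrices has dimension `1 + C(d,2) = 1 + d(d-1)/2`. -/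
theorem finrank_span_symmetric_perm_matrices (d : ℕ) (hd : 1 ≤ d) :
    Module.finrank ℂ
      (Submodule.span ℂ {M : Matrix (Fin d) (Fin d) ℂ |
        ∃ σ : Equiv.Perm (Fin d), M = permMat σ ∧ Mᵀ = M}) = 1 + d.choose 2 := by
  have : NeZero d := NeZero.of_pos hd
  rw [setOf_symmetric_permMat_eq, span_image_permMat_involutive,
    finrank_span_eq_card linearIndependent_symmPermBasis, Fintype.card_option,
    Sym2.card_subtype_not_diag, Fintype.card_fin, add_comm]
end
end
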